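/- Let x, z, p ∈ ℝ^d, let c_1, …, c_m ∈ ℝ^d, and let r ≥ 0. If the oriented segment from x to z stabs the closed balls of radius r centered at c_1, …, c_m in order, then the oriented segment from p to z stabs the closed balls of radius r + dist(p,x) centered at c_1, …, c_m in order. -/
import Mathlib


/-- The oriented segment from `x` to `y` stabs the sets `O 0, …, O (m-1)` in order. -/
def SegStabsInOrder {E : Type*} [AddCommGroup E] [Module ℝ E]
    (x y : E) (m : ℕ) (O : ℕ → Set E) : Prop :=
  ∃ t : ℕ → ℝ,
    (∀ a, a < m → t a ∈ Set.Icc (0:ℝ) 1) ∧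
    (∀ a b, a ≤ b → b < m → t a ≤ t b) ∧
    (∀ a, a < m → x + t a • (y - x) ∈ O a)

theorem stmt4 (d m : ℕ) (x z p : EuclideanSpace ℝ (Fin d))
    (c : ℕ → EuclideanSpace ℝ (Fin d)) (r : ℝ) (hr : 0 ≤ r)
    (h : SegStabsInOrder x z m (fun a => Metric.closedBall (c a) r)) :
    SegStabsInOrder p z m (fun a => Metric.closedBall (c a) (r + dist p x)) := by
  obtain ⟨t, ht01, hmono, hmem⟩ := h
  refine ⟨t, ht01, hmono, fun a ha => ?_⟩
  have h1 := (ht01 a ha).1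
  have h2 := (ht01 a ha).2
  have hm := hmem a ha
  simp only [Metric.mem_closedBall] at hm ⊢
  have key : p + t a • (z - p) - (x + t a • (z - x)) = (1 - t a) • (p - x) := by
    module
  calc dist (p + t a • (z - p)) (c a)
      ≤ dist (p + t a • (z - p)) (x + t a • (z - x)) + dist (x + t a • (z - x)) (c a) :=
        dist_triangle _ _ _
    _ ≤ dist p x + r := by
        refine add_le_add ?_ hm
        rw [dist_eq_norm, key, norm_smul, dist_eq_norm]
        have : ‖(1 - t a : ℝ)‖ ≤ 1 := by
          rw [Real.norm_eq_abs, abs_le]; constructor <;> linarith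
        calc ‖(1 - t a : ℝ)‖ * ‖p - x‖ ≤ 1 * ‖p - x‖ :=
              mul_le_mul_of_nonneg_right this (norm_nonneg _)
          _ = ‖p - x‖ := one_mul _
    _ = r + dist p x := by ring
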